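/- arXiv:1210.5232 — 12 statements merged into one kernel-verified Lean document; each statement's English description precedes it below -/
import Mathlib

section
/- Let x and y be adjacent vertices of the network and let u be a state with u(x) − u(y) ∈ {−1, 0, 1} (computed in ℤ/nℤ). Then the updated state satisfies 𝒢u(x) − 𝒢u(y) ∈ {−1, 0, 1}. In particular, if a vertex x is subordinate to a neighbor y at time t (i.e. u_t(y) = u_t(x) + 1), then u_s(x) − u_s(y) ∈ {−1, 0, 1} for all s ≥ t. -/
/- The Greenberg–Hastings update rule on a simple graph `G` with state space `ZMod n`:
`𝒢u(x) = u(x)+1` if `u(x) ≠ 0`; `𝒢u(x) = 1` if `u(x) = 0` and some neighbor is in state `1`;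
`𝒢u(x) = 0` otherwise. -/
open Classical in
noncomputable def ghUpdate {V : Type*} (n : ℕ) (G : SimpleGraph V) (u : V → ZMod n) :
    V → ZMod n :=
  fun x => if u x = 0 then (if ∃ y, G.Adj x y ∧ u y = 1 then 1 else 0) else u x + 1

/-!
Every vertex either advances by one or stays at the rest state `0`, and it stays only if no
neighbor is in state `1`. If both ends of an edge advance, their difference is unchanged; if
both stay, it becomes `0`. If only `x` stays, then `u y ≠ 1`, so the difference `-u y` was `0`
or `1` and drops by one; symmetrically if only `y` stays.
-/

section Signs

variable {R : Type*} [AddGroupWithOne R]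

lemma sub_one_mem_of_ne_neg_one {a : R} (ha : a ∈ ({-1, 0, 1} : Set R)) (h : a ≠ -1) :
    a - 1 ∈ ({-1, 0, 1} : Set R) := by
  rcases ha with rfl | rfl | rfl <;> simp_all

lemma add_one_mem_of_ne_one {a : R} (ha : a ∈ ({-1, 0, 1} : Set R)) (h : a ≠ 1) :
    a + 1 ∈ ({-1, 0, 1} : Set R) := by
  rcases ha with rfl | rfl | rfl <;> simp_all

end Signs

section GreenbergHastings

variable {V : Type*} {n : ℕ} {G : SimpleGraph V}

lemma ghUpdate_eq_add_one_or_rest (u : V → ZMod n) (x : V) :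
    ghUpdate n G u x = u x + 1 ∨
      (u x = 0 ∧ (∀ y, G.Adj x y → u y ≠ 1) ∧ ghUpdate n G u x = 0) := by
  unfold ghUpdate
  by_cases hx : u x = 0
  · by_cases hfire : ∃ y, G.Adj x y ∧ u y = 1
    · exact Or.inl (by rw [if_pos hx, if_pos hfire, hx, zero_add])
    · exact Or.inr ⟨hx, fun y hxy h1 => hfire ⟨y, hxy, h1⟩, by rw [if_pos hx, if_neg hfire]⟩
  · exact Or.inl (if_neg hx)

lemma ghUpdate_sub_mem_of_adj {u : V → ZMod n} {x y : V} (hxy : G.Adj x y)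
    (hu : u x - u y ∈ ({-1, 0, 1} : Set (ZMod n))) :
    ghUpdate n G u x - ghUpdate n G u y ∈ ({-1, 0, 1} : Set (ZMod n)) := by
  rcases ghUpdate_eq_add_one_or_rest (G := G) u x with hx | ⟨hx0, hxy1, hx⟩ <;>
    rcases ghUpdate_eq_add_one_or_rest (G := G) u y with hy | ⟨hy0, hyx1, hy⟩
  · rwa [hx, hy, add_sub_add_right_eq_sub]
  · have hux : u x ≠ 1 := hyx1 x hxy.symm
    rw [hx, hy, show u x + 1 - 0 = u x - u y + 1 by rw [hy0]; ring]
    exact add_one_mem_of_ne_one hu (by rwa [hy0, sub_zero])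
  · have huy : u y ≠ 1 := hxy1 y hxy
    rw [hx, hy, show (0 : ZMod n) - (u y + 1) = u x - u y - 1 by rw [hx0]; ring]
    exact sub_one_mem_of_ne_neg_one hu (by rwa [hx0, zero_sub, Ne, neg_inj])
  · simp [hx, hy]

end GreenbergHastings

theorem stmt_0_general {V : Type*} (n : ℕ) (G : SimpleGraph V)
    (x y : V) (hxy : G.Adj x y) :
    (∀ u : V → ZMod n, u x - u y ∈ ({-1, 0, 1} : Set (ZMod n)) →
      ghUpdate n G u x - ghUpdate n G u y ∈ ({-1, 0, 1} : Set (ZMod n))) ∧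
    (∀ (u₀ : V → ZMod n) (t : ℕ),
      (ghUpdate n G)^[t] u₀ y = (ghUpdate n G)^[t] u₀ x + 1 →
      ∀ s, t ≤ s →
        (ghUpdate n G)^[s] u₀ x - (ghUpdate n G)^[s] u₀ y ∈ ({-1, 0, 1} : Set (ZMod n))) := by
  refine ⟨fun u => ghUpdate_sub_mem_of_adj hxy, fun u₀ t ht s hts => ?_⟩
  induction s, hts using Nat.le_induction with
  | base => exact Or.inl (by rw [ht, sub_add_cancel_left])
  | succ s _ ih =>
    rw [Function.iterate_succ_apply']
    exact ghUpdate_sub_mem_of_adj hxy ih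

theorem stmt_0 {V : Type*} [Fintype V] (n : ℕ) (hn : 2 ≤ n) (G : SimpleGraph V)
    (x y : V) (hxy : G.Adj x y) :
    (∀ u : V → ZMod n, u x - u y ∈ ({-1, 0, 1} : Set (ZMod n)) →
      ghUpdate n G u x - ghUpdate n G u y ∈ ({-1, 0, 1} : Set (ZMod n))) ∧
    (∀ (u₀ : V → ZMod n) (t : ℕ),
      (ghUpdate n G)^[t] u₀ y = (ghUpdate n G)^[t] u₀ x + 1 →
      ∀ s, t ≤ s →
        (ghUpdate n G)^[s] u₀ x - (ghUpdate n G)^[s] u₀ y ∈ ({-1, 0, 1} : Set (ZMod n))) :=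
  stmt_0_general n G x y hxy
end

section
/- Let x and y be adjacent vertices, let t ≥ 0, and suppose that y advances at every step from time t onward, i.e. u_{s+1}(y) = u_s(y) + 1 for all s ≥ t (in particular y is n-periodic), and that x is subordinate to y at time t, i.e. u_t(y) = u_t(x) + 1. Then for all s ≥ t one has u_s(y) = u_s(x) + 1 and u_{s+1}(x) = u_s(x) + 1; in particular x is n-periodic from time t, i.e. u_{s+n}(x) = u_s(x) for all s ≥ t. -/
theorem ghUpdate_apply_eq_add_one_of_adj {V : Type*} {n : ℕ} {G : SimpleGraph V}
    {u : V → ZMod n} {x y : V} (hxy : G.Adj x y) (hsub : u y = u x + 1) :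
    ghUpdate n G u x = u x + 1 := by
  unfold ghUpdate
  by_cases hx : u x = 0
  · rw [if_pos hx, if_pos ⟨y, hxy, by rw [hsub, hx, zero_add]⟩, hx, zero_add]
  · rw [if_neg hx]

theorem ZMod.add_natCast_of_forall_ge_succ {n : ℕ} {a : ℕ → ZMod n} {t : ℕ}
    (h : ∀ s, t ≤ s → a (s + 1) = a s + 1) {s : ℕ} (hs : t ≤ s) (m : ℕ) :
    a (s + m) = a s + m := by
  induction m with
  | zero => simp
  | succ m ih =>
    rw [← add_assoc, h _ (hs.trans (Nat.le_add_right s m)), ih]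
    push_cast
    ring

theorem ZMod.periodic_of_forall_ge_succ {n : ℕ} {a : ℕ → ZMod n} {t : ℕ}
    (h : ∀ s, t ≤ s → a (s + 1) = a s + 1) {s : ℕ} (hs : t ≤ s) :
    a (s + n) = a s := by
  rw [ZMod.add_natCast_of_forall_ge_succ h hs, ZMod.natCast_self, add_zero]

theorem stmt_1_general {V : Type*} (n : ℕ) (G : SimpleGraph V)
    (x y : V) (hxy : G.Adj x y) (u₀ : V → ZMod n) (t : ℕ)
    (hadv : ∀ s, t ≤ s → (ghUpdate n G)^[s + 1] u₀ y = (ghUpdate n G)^[s] u₀ y + 1)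
    (hsub : (ghUpdate n G)^[t] u₀ y = (ghUpdate n G)^[t] u₀ x + 1) :
    (∀ s, t ≤ s →
      (ghUpdate n G)^[s] u₀ y = (ghUpdate n G)^[s] u₀ x + 1 ∧
      (ghUpdate n G)^[s + 1] u₀ x = (ghUpdate n G)^[s] u₀ x + 1) ∧
    (∀ s, t ≤ s → (ghUpdate n G)^[s + n] u₀ x = (ghUpdate n G)^[s] u₀ x) := by
  set u : ℕ → V → ZMod n := fun s => (ghUpdate n G)^[s] u₀
  have hadv_of_sub : ∀ s, u s y = u s x + 1 → u (s + 1) x = u s x + 1 := fun s hs => by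
    simp only [u, Function.iterate_succ_apply']
    exact ghUpdate_apply_eq_add_one_of_adj hxy hs
  have hsub_ge : ∀ s, t ≤ s → u s y = u s x + 1 := by
    refine Nat.le_induction hsub fun s hs ih => ?_
    rw [show u (s + 1) y = u s y + 1 from hadv s hs, ih, hadv_of_sub s ih]
  have key : ∀ s, t ≤ s → u s y = u s x + 1 ∧ u (s + 1) x = u s x + 1 :=
    fun s hs => ⟨hsub_ge s hs, hadv_of_sub s (hsub_ge s hs)⟩
  exact ⟨key, fun s hs => ZMod.periodic_of_forall_ge_succ (a := fun s => u s x)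
    (fun s hs => (key s hs).2) hs⟩

theorem stmt_1 {V : Type*} [Fintype V] (n : ℕ) (hn : 2 ≤ n) (G : SimpleGraph V)
    (x y : V) (hxy : G.Adj x y) (u₀ : V → ZMod n) (t : ℕ)
    (hadv : ∀ s, t ≤ s → (ghUpdate n G)^[s + 1] u₀ y = (ghUpdate n G)^[s] u₀ y + 1)
    (hsub : (ghUpdate n G)^[t] u₀ y = (ghUpdate n G)^[t] u₀ x + 1) :
    (∀ s, t ≤ s →
      (ghUpdate n G)^[s] u₀ y = (ghUpdate n G)^[s] u₀ x + 1 ∧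
      (ghUpdate n G)^[s + 1] u₀ x = (ghUpdate n G)^[s] u₀ x + 1) ∧
    (∀ s, t ≤ s → (ghUpdate n G)^[s + n] u₀ x = (ghUpdate n G)^[s] u₀ x) :=
  stmt_1_general n G x y hxy u₀ t hadv hsub
end

section
/- Continuity is forward-invariant under the Greenberg–Hastings update: if a state u is continuous (i.e. u(x) − u(y) ∈ {−1, 0, 1} in ℤ/nℤ for every pair of adjacent vertices x, y of the network), then the updated state 𝒢u is continuous. -/
def contState {V : Type*} {n : ℕ} (G : SimpleGraph V) (u : V → ZMod n) : Prop :=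
  ∀ x y : V, G.Adj x y → u x - u y ∈ ({-1, 0, 1} : Set (ZMod n))

section UnitDifferences

variable {R : Type*} [Ring R]

theorem neg_mem_neg_one_zero_one {a : R} :
    -a ∈ ({-1, 0, 1} : Set R) ↔ a ∈ ({-1, 0, 1} : Set R) := by
  simp only [Set.mem_insert_iff, Set.mem_singleton_iff, neg_eq_iff_eq_neg, neg_neg, neg_zero]
  tauto

theorem sub_mem_neg_one_zero_one_of_mem_zero_one {a b : R}
    (ha : a ∈ ({0, 1} : Set R)) (hb : b ∈ ({0, 1} : Set R)) :
    a - b ∈ ({-1, 0, 1} : Set R) := by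
  simp only [Set.mem_insert_iff, Set.mem_singleton_iff] at ha hb ⊢
  rcases ha with rfl | rfl <;> rcases hb with rfl | rfl <;> simp

end UnitDifferences

namespace ghUpdate

variable {V : Type*} {n : ℕ} {G : SimpleGraph V} {u : V → ZMod n} {x y : V}

theorem apply_of_ne_zero (hx : u x ≠ 0) : ghUpdate n G u x = u x + 1 :=
  if_neg hx

theorem apply_mem_zero_one_of_eq_zero (hx : u x = 0) :
    ghUpdate n G u x ∈ ({0, 1} : Set (ZMod n)) := by
  unfold ghUpdate
  split_ifs <;> simp

theorem apply_eq_one_of_adj (hx : u x = 0) (hxy : G.Adj x y) (hy : u y = 1) :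
    ghUpdate n G u x = 1 := by
  simp only [ghUpdate, if_pos hx]
  exact if_pos ⟨y, hxy, hy⟩

/-- Here `u y` is `1` or `-1`: either `x` fires and the new difference is `1 - 2`, or `y` returns
to rest and only `ghUpdate n G u x ∈ {0, 1}` remains. -/
theorem sub_mem_of_eq_zero_of_ne_zero (hxy : G.Adj x y) (hx : u x = 0) (hy : u y ≠ 0)
    (hu : u x - u y ∈ ({-1, 0, 1} : Set (ZMod n))) :
    ghUpdate n G u x - ghUpdate n G u y ∈ ({-1, 0, 1} : Set (ZMod n)) := by
  rw [hx, zero_sub, neg_mem_neg_one_zero_one] at hu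
  rw [apply_of_ne_zero hy]
  simp only [Set.mem_insert_iff, Set.mem_singleton_iff] at hu
  rcases hu with hy' | hy' | hy'
  · rw [hy', neg_add_cancel, sub_zero]
    have := apply_mem_zero_one_of_eq_zero (G := G) hx
    simp only [Set.mem_insert_iff, Set.mem_singleton_iff] at this ⊢
    tauto
  · exact absurd hy' hy
  · rw [apply_eq_one_of_adj hx hxy hy', hy']
    simp

end ghUpdate

theorem stmt_2_general {V : Type*} (n : ℕ) (G : SimpleGraph V)
    (u : V → ZMod n) (hu : contState G u) : contState G (ghUpdate n G u) := by
  intro x y hxy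
  by_cases hx : u x = 0 <;> by_cases hy : u y = 0
  · exact sub_mem_neg_one_zero_one_of_mem_zero_one
      (ghUpdate.apply_mem_zero_one_of_eq_zero hx) (ghUpdate.apply_mem_zero_one_of_eq_zero hy)
  · exact ghUpdate.sub_mem_of_eq_zero_of_ne_zero hxy hx hy (hu x y hxy)
  · rw [← neg_mem_neg_one_zero_one, neg_sub]
    exact ghUpdate.sub_mem_of_eq_zero_of_ne_zero hxy.symm hy hx (hu y x hxy.symm)
  · rw [ghUpdate.apply_of_ne_zero hx, ghUpdate.apply_of_ne_zero hy, add_sub_add_right_eq_sub]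
    exact hu x y hxy

theorem stmt_2 {V : Type*} [Fintype V] (n : ℕ) (hn : 2 ≤ n) (G : SimpleGraph V)
    (u : V → ZMod n) (hu : contState G u) : contState G (ghUpdate n G u) :=
  stmt_2_general n G u hu
end

section
/- Suppose the initial state u₀ has a seed supported on the closed walk x₀, x₁, …, x_K = x₀ (consecutive vertices adjacent), i.e. u₀(x_i) = i mod n for all 0 ≤ i ≤ K. Then for every time t ≥ 0 and every index i one has u_t(x_i) = (i + t) mod n. In particular every node on a seed advances by 1 at every step, every node on a seed is n-periodic, and the same closed walk supports a seed of u_t for every t. -/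
/-!
Every vertex of a seed has a neighbour one state ahead of it: the next vertex of the walk, and for
the last vertex `x K = x 0` the vertex `x 1` (as `K = 0` in `ZMod n`). A vertex with a neighbour one
state ahead always advances by one, so the seed advances rigidly and stays a seed.
-/

theorem ghUpdate_apply_of_adj_eq_add_one {V : Type*} {n : ℕ} {G : SimpleGraph V}
    {u : V → ZMod n} {x y : V} (hxy : G.Adj x y) (hy : u y = u x + 1) :
    ghUpdate n G u x = u x + 1 := by
  unfold ghUpdate
  by_cases hx : u x = 0
  · rw [if_pos hx, if_pos ⟨y, hxy, by rw [hy, hx, zero_add]⟩, hx, zero_add]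
  · rw [if_neg hx]

theorem ghUpdate_shifted_seed {V : Type*} {n : ℕ} {G : SimpleGraph V} {u : V → ZMod n}
    {K : ℕ} {x : ℕ → V} {c : ZMod n} (hK : 1 ≤ K) (hcl : x K = x 0)
    (hadj : ∀ i < K, G.Adj (x i) (x (i + 1))) (hu : ∀ i ≤ K, u (x i) = i + c) :
    ∀ i ≤ K, ghUpdate n G u (x i) = i + (c + 1) := by
  have hK0 : (K : ZMod n) = 0 := by
    simpa [hcl, hu 0 (Nat.zero_le K)] using hu K le_rfl
  intro i hi
  rw [← add_assoc, ← hu i hi]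
  rcases hi.lt_or_eq with hlt | rfl
  · refine ghUpdate_apply_of_adj_eq_add_one (hadj i hlt) ?_
    rw [hu (i + 1) hlt, hu i hi]
    push_cast
    ring
  · refine ghUpdate_apply_of_adj_eq_add_one (y := x 1) (hcl ▸ hadj 0 hK) ?_
    rw [hu 1 hK, hu i le_rfl, hK0]
    push_cast
    ring

theorem stmt_3_general {V : Type*} (n : ℕ) (G : SimpleGraph V)
    (u₀ : V → ZMod n) (K : ℕ) (x : ℕ → V) (hK : 1 ≤ K) (hcl : x K = x 0)
    (hadj : ∀ i < K, G.Adj (x i) (x (i + 1)))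
    (hseed : ∀ i ≤ K, u₀ (x i) = (i : ZMod n)) :
    ∀ (t : ℕ) (i : ℕ), i ≤ K → (ghUpdate n G)^[t] u₀ (x i) = ((i + t : ℕ) : ZMod n) := by
  intro t
  induction t with
  | zero => simpa using hseed
  | succ t ih =>
    intro i hi
    rw [Function.iterate_succ_apply']
    have hseed_t : ∀ j ≤ K, (ghUpdate n G)^[t] u₀ (x j) = j + t := fun j hj => by
      rw [ih j hj, Nat.cast_add]
    rw [ghUpdate_shifted_seed hK hcl hadj hseed_t i hi]
    push_cast
    ring

theorem stmt_3 {V : Type*} [Fintype V] (n : ℕ) (hn : 2 ≤ n) (G : SimpleGraph V)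
    (u₀ : V → ZMod n) (K : ℕ) (x : ℕ → V) (hK : 1 ≤ K) (hcl : x K = x 0)
    (hadj : ∀ i < K, G.Adj (x i) (x (i + 1)))
    (hseed : ∀ i ≤ K, u₀ (x i) = (i : ZMod n)) :
    ∀ (t : ℕ) (i : ℕ), i ≤ K → (ghUpdate n G)^[t] u₀ (x i) = ((i + t : ℕ) : ZMod n) :=
  stmt_3_general n G u₀ K x hK hcl hadj hseed
end

section
/- Let x and y be adjacent vertices and suppose y advances at every step from time t onward, i.e. u_{s+1}(y) = u_s(y) + 1 for all s ≥ t. Then x eventually advances at every step: there exists T ≥ t such that u_{s+1}(x) = u_s(x) + 1 for all s ≥ T; in particular x is n-periodic from time T. -/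
theorem ZMod.val_sub_one_lt {n : ℕ} [Fact (1 < n)] {a : ZMod n} (ha : a ≠ 0) :
    (a - 1).val < a.val := by
  have hpos : 0 < a.val := Nat.pos_of_ne_zero ((ZMod.val_ne_zero a).2 ha)
  rw [ZMod.val_sub (by rwa [ZMod.val_one]), ZMod.val_one]
  omega

theorem ZMod.add_nat_eq_of_forall_succ_eq_add_one {n T : ℕ} {a : ℕ → ZMod n}
    (h : ∀ s, T ≤ s → a (s + 1) = a s + 1) (s : ℕ) (hs : T ≤ s) : a (s + n) = a s := by
  have shift : ∀ k : ℕ, a (s + k) = a s + k := by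
    intro k
    induction k with
    | zero => simp
    | succ k ih =>
      rw [← add_assoc, h _ (by omega), ih]
      push_cast
      ring
  rw [shift, ZMod.natCast_self, add_zero]

section GreenbergHastings

variable {V : Type*} {n : ℕ} {G : SimpleGraph V} {u : V → ZMod n} {x y : V}

theorem ghUpdate_stalled (hstall : ghUpdate n G u x ≠ u x + 1) :
    u x = 0 ∧ ghUpdate n G u x = 0 ∧ ∀ y, G.Adj x y → u y ≠ 1 := by
  by_cases hx : u x = 0
  · by_cases hexc : ∃ y, G.Adj x y ∧ u y = 1
    · simp [ghUpdate, hx, hexc] at hstall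
    · exact ⟨hx, by simp [ghUpdate, hx, hexc], fun z hz hz1 ↦ hexc ⟨z, hz, hz1⟩⟩
  · simp [ghUpdate, hx] at hstall

/-- Zero exactly when `x` lags one step behind `y`. -/
def lagDefect (u : V → ZMod n) (x y : V) : ℕ := (u x + 1 - u y).val

theorem lagDefect_ghUpdate_eq_of_advance (hx : ghUpdate n G u x = u x + 1)
    (hy : ghUpdate n G u y = u y + 1) : lagDefect (ghUpdate n G u) x y = lagDefect u x y := by
  rw [lagDefect, lagDefect, hx, hy, add_sub_add_right_eq_sub]

theorem lagDefect_ghUpdate_lt_of_stalled [Fact (1 < n)] (hxy : G.Adj x y)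
    (hx : ghUpdate n G u x ≠ u x + 1) (hy : ghUpdate n G u y = u y + 1) :
    lagDefect (ghUpdate n G u) x y < lagDefect u x y := by
  obtain ⟨hx0, hx0', hy1⟩ := ghUpdate_stalled hx
  have hne : u x + 1 - u y ≠ 0 := by
    rw [hx0, zero_add, sub_ne_zero]
    exact (hy1 y hxy).symm
  have hdrop : ghUpdate n G u x + 1 - ghUpdate n G u y = u x + 1 - u y - 1 := by
    rw [hx0, hx0', hy]
    ring
  rw [lagDefect, lagDefect, hdrop]
  exact ZMod.val_sub_one_lt hne

theorem lagDefect_ghUpdate_le [Fact (1 < n)] (hxy : G.Adj x y)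
    (hy : ghUpdate n G u y = u y + 1) : lagDefect (ghUpdate n G u) x y ≤ lagDefect u x y := by
  by_cases hx : ghUpdate n G u x = u x + 1
  · exact (lagDefect_ghUpdate_eq_of_advance hx hy).le
  · exact (lagDefect_ghUpdate_lt_of_stalled hxy hx hy).le

theorem eventually_advances_of_adj_advances [Fact (1 < n)] (hxy : G.Adj x y) (u₀ : V → ZMod n)
    (t : ℕ) (hadv : ∀ s, t ≤ s → (ghUpdate n G)^[s + 1] u₀ y = (ghUpdate n G)^[s] u₀ y + 1) :
    ∃ T, t ≤ T ∧ ∀ s, T ≤ s → (ghUpdate n G)^[s + 1] u₀ x = (ghUpdate n G)^[s] u₀ x + 1 := by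
  let u : ℕ → V → ZMod n := fun s ↦ (ghUpdate n G)^[s] u₀
  have hstep : ∀ s, u (s + 1) = ghUpdate n G (u s) := fun s ↦ Function.iterate_succ_apply' ..
  have hadv' : ∀ k, ghUpdate n G (u (t + k)) y = u (t + k) y + 1 := fun k ↦ by
    rw [← hstep]
    exact hadv _ (by omega)
  have hanti : Antitone fun k ↦ lagDefect (u (t + k)) x y := antitone_nat_of_succ_le fun k ↦ by
    simpa only [← add_assoc, hstep] using lagDefect_ghUpdate_le hxy (hadv' k)
  obtain ⟨N, hN⟩ := WellFoundedLT.antitone_chain_condition hanti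
  refine ⟨t + N, by omega, fun s hs ↦ ?_⟩
  obtain ⟨k, rfl⟩ : ∃ k, s = t + k := ⟨s - t, by omega⟩
  change u (t + k + 1) x = u (t + k) x + 1
  by_contra hstall
  rw [hstep] at hstall
  have hlt := lagDefect_ghUpdate_lt_of_stalled hxy hstall (hadv' k)
  rw [← hstep, add_assoc, ← hN k (by omega), ← hN (k + 1) (by omega)] at hlt
  exact lt_irrefl _ hlt

end GreenbergHastings

theorem stmt_5_general {V : Type*} (n : ℕ) (hn : 2 ≤ n) (G : SimpleGraph V)
    (x y : V) (hxy : G.Adj x y) (u₀ : V → ZMod n) (t : ℕ)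
    (hadv : ∀ s, t ≤ s → (ghUpdate n G)^[s + 1] u₀ y = (ghUpdate n G)^[s] u₀ y + 1) :
    ∃ T, t ≤ T ∧
      (∀ s, T ≤ s → (ghUpdate n G)^[s + 1] u₀ x = (ghUpdate n G)^[s] u₀ x + 1) ∧
      (∀ s, T ≤ s → (ghUpdate n G)^[s + n] u₀ x = (ghUpdate n G)^[s] u₀ x) := by
  have : Fact (1 < n) := ⟨hn⟩
  obtain ⟨T, htT, hxadv⟩ := eventually_advances_of_adj_advances hxy u₀ t hadv
  exact ⟨T, htT, hxadv,
    ZMod.add_nat_eq_of_forall_succ_eq_add_one (a := fun s ↦ (ghUpdate n G)^[s] u₀ x) hxadv⟩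

theorem stmt_5 {V : Type*} [Fintype V] (n : ℕ) (hn : 2 ≤ n) (G : SimpleGraph V)
    (x y : V) (hxy : G.Adj x y) (u₀ : V → ZMod n) (t : ℕ)
    (hadv : ∀ s, t ≤ s → (ghUpdate n G)^[s + 1] u₀ y = (ghUpdate n G)^[s] u₀ y + 1) :
    ∃ T, t ≤ T ∧
      (∀ s, T ≤ s → (ghUpdate n G)^[s + 1] u₀ x = (ghUpdate n G)^[s] u₀ x + 1) ∧
      (∀ s, T ≤ s → (ghUpdate n G)^[s + n] u₀ x = (ghUpdate n G)^[s] u₀ x) :=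
  stmt_5_general n hn G x y hxy u₀ t hadv
end

section
/- The degree of a state on a closed walk is invariant under the Greenberg–Hastings update: let W = (x₀, …, x_K) be a closed walk and u a state continuous on the consecutive pairs of W. Then 𝒢u is continuous on the consecutive pairs of W and deg(𝒢u, W) = deg(u, W). Consequently deg(u_t, W) = deg(u₀, W) for all t whenever u₀ is continuous on the consecutive pairs of W. -/
/- A closed walk of length `K` in `G`, encoded as `x : ℕ → V` with `x K = x 0`,
`K ≥ 1`, consecutive vertices adjacent. -/
def isClosedWalk {V : Type*} (G : SimpleGraph V) (K : ℕ) (x : ℕ → V) : Prop :=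
  1 ≤ K ∧ x K = x 0 ∧ ∀ i < K, G.Adj (x i) (x (i + 1))

/- The integer in `{-1, 0, 1}` congruent to `a : ZMod n`, for `a ∈ {-1, 0, 1}` and `n ≥ 3`. -/
def dInt {n : ℕ} (a : ZMod n) : ℤ :=
  if a = 0 then 0 else if a = 1 then 1 else -1

/- `u` is continuous on the consecutive pairs of the walk `x` of length `K`. -/
def contOn {V : Type*} {n : ℕ} (u : V → ZMod n) (K : ℕ) (x : ℕ → V) : Prop :=
  ∀ i < K, u (x (i + 1)) - u (x i) ∈ ({-1, 0, 1} : Set (ZMod n))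

/- The degree of the state `u` on the closed walk `x` of length `K`:
`(1/n) ∑ dInt (u(x_{i+1}) - u(x_i))`. -/
noncomputable def degW {V : Type*} (n : ℕ) (u : V → ZMod n) (K : ℕ) (x : ℕ → V) : ℚ :=
  ((∑ i ∈ Finset.range K, dInt (u (x (i + 1)) - u (x i)) : ℤ) : ℚ) / (n : ℚ)

/- Write `𝒢u = u + ε` with `ε ∈ {0, 1}`. Along an edge `a → b` the increment `d_u(a, b)` then
changes by `ε b - ε a`, and this never leaves `{-1, 0, 1}`: if `d_u(a, b) = 1` then `u b = u a + 1`,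
so either `u a ≠ 0` or `a` has the neighbour `b` in state `1`; in both cases `ε a = 1`
(symmetrically when `d_u(a, b) = -1`). Summing around a closed walk, the changes telescope. -/

section

variable {n : ℕ}

lemma dInt_mem_Icc (d : ZMod n) : dInt d ∈ Set.Icc (-1) 1 := by
  unfold dInt
  split_ifs <;> simp

lemma intCast_dInt {d : ZMod n} (hd : d ∈ ({-1, 0, 1} : Set (ZMod n))) :
    ((dInt d : ℤ) : ZMod n) = d := by
  unfold dInt
  split_ifs <;> simp_all

lemma intCast_mem_of_mem_Icc {m : ℤ} (hm : m ∈ Set.Icc (-1) 1) :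
    (m : ZMod n) ∈ ({-1, 0, 1} : Set (ZMod n)) := by
  obtain ⟨h1, h2⟩ := hm
  interval_cases m <;> simp

lemma dInt_intCast (hn : 3 ≤ n) {m : ℤ} (hm : m ∈ Set.Icc (-1) 1) :
    dInt (m : ZMod n) = m := by
  have hne : ∀ k : ℤ, 0 < k → k < 3 → (k : ZMod n) ≠ 0 := fun k hk0 hk3 h => by
    have := Int.le_of_dvd hk0 ((ZMod.intCast_zmod_eq_zero_iff_dvd k n).1 h)
    omega
  have h1 : (1 : ZMod n) ≠ 0 := by exact_mod_cast hne 1 one_pos (by norm_num)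
  have h2 : (-1 : ZMod n) ≠ 1 := fun h => hne 2 two_pos (by norm_num) (by
    push_cast; linear_combination -h)
  obtain ⟨hlo, hhi⟩ := hm
  interval_cases m <;> simp [dInt, h1, h2, neg_ne_zero.2 h1]

end

open Classical in
noncomputable def ghIncrement {V : Type*} (n : ℕ) (G : SimpleGraph V) (u : V → ZMod n) (a : V) :
    ℤ :=
  if u a = 0 ∧ ¬∃ y, G.Adj a y ∧ u y = 1 then 0 else 1

section

variable {V : Type*} {n : ℕ} {G : SimpleGraph V} {u : V → ZMod n}

lemma ghUpdate_eq_add_ghIncrement (a : V) :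
    ghUpdate n G u a = u a + (ghIncrement n G u a : ZMod n) := by
  unfold ghUpdate ghIncrement
  split_ifs <;> simp_all

lemma ghIncrement_eq_zero_or_one (a : V) :
    ghIncrement n G u a = 0 ∨ ghIncrement n G u a = 1 := by
  unfold ghIncrement
  split_ifs <;> simp

lemma ghIncrement_eq_one_of_adj {a b : V} (hab : G.Adj a b) (h : u b - u a = 1) :
    ghIncrement n G u a = 1 := by
  refine if_neg fun ⟨ha, hnone⟩ => hnone ⟨b, hab, ?_⟩
  linear_combination h + ha

lemma ghUpdate_sub_ghUpdate {a b : V} (hd : u b - u a ∈ ({-1, 0, 1} : Set (ZMod n))) :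
    ghUpdate n G u b - ghUpdate n G u a =
      ((dInt (u b - u a) + (ghIncrement n G u b - ghIncrement n G u a) : ℤ) : ZMod n) := by
  rw [ghUpdate_eq_add_ghIncrement, ghUpdate_eq_add_ghIncrement]
  push_cast
  rw [intCast_dInt hd]
  ring

lemma dInt_add_ghIncrement_sub_mem_Icc {a b : V} (hab : G.Adj a b)
    (hd : u b - u a ∈ ({-1, 0, 1} : Set (ZMod n))) :
    dInt (u b - u a) + (ghIncrement n G u b - ghIncrement n G u a) ∈ Set.Icc (-1) 1 := by
  have hcast := intCast_dInt hd
  have hup (h : dInt (u b - u a) = 1) : ghIncrement n G u a = 1 :=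
    ghIncrement_eq_one_of_adj hab (by rw [← hcast, h, Int.cast_one])
  have hdown (h : dInt (u b - u a) = -1) : ghIncrement n G u b = 1 := by
    refine ghIncrement_eq_one_of_adj hab.symm ?_
    have : u b - u a = -1 := by rw [← hcast, h, Int.cast_neg, Int.cast_one]
    linear_combination -this
  obtain ⟨hlo, hhi⟩ := dInt_mem_Icc (u b - u a)
  rcases ghIncrement_eq_zero_or_one (G := G) (u := u) a with ha | ha <;>
    rcases ghIncrement_eq_zero_or_one (G := G) (u := u) b with hb | hb <;>
    grind

variable {K : ℕ} {x : ℕ → V}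

lemma contOn_ghUpdate (hadj : ∀ i < K, G.Adj (x i) (x (i + 1))) (hu : contOn u K x) :
    contOn (ghUpdate n G u) K x := fun i hi => by
  rw [ghUpdate_sub_ghUpdate (hu i hi)]
  exact intCast_mem_of_mem_Icc (dInt_add_ghIncrement_sub_mem_Icc (hadj i hi) (hu i hi))

lemma sum_dInt_ghUpdate (hn : 3 ≤ n) (hadj : ∀ i < K, G.Adj (x i) (x (i + 1)))
    (hu : contOn u K x) :
    ∑ i ∈ Finset.range K, dInt (ghUpdate n G u (x (i + 1)) - ghUpdate n G u (x i)) =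
      ∑ i ∈ Finset.range K, dInt (u (x (i + 1)) - u (x i)) +
        (ghIncrement n G u (x K) - ghIncrement n G u (x 0)) := by
  rw [← Finset.sum_range_sub (fun i => ghIncrement n G u (x i)), ← Finset.sum_add_distrib]
  refine Finset.sum_congr rfl fun i hi => ?_
  have hi := Finset.mem_range.1 hi
  rw [ghUpdate_sub_ghUpdate (hu i hi),
    dInt_intCast hn (dInt_add_ghIncrement_sub_mem_Icc (hadj i hi) (hu i hi))]

lemma degW_ghUpdate (hn : 3 ≤ n) (hW : isClosedWalk G K x) (hu : contOn u K x) :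
    degW n (ghUpdate n G u) K x = degW n u K x := by
  unfold degW
  rw [sum_dInt_ghUpdate hn hW.2.2 hu, hW.2.1, sub_self, add_zero]

lemma contOn_iterate_ghUpdate (hadj : ∀ i < K, G.Adj (x i) (x (i + 1))) (hu : contOn u K x)
    (t : ℕ) : contOn ((ghUpdate n G)^[t] u) K x := by
  induction t with
  | zero => exact hu
  | succ t ih =>
    rw [Function.iterate_succ_apply']
    exact contOn_ghUpdate hadj ih

lemma degW_iterate_ghUpdate (hn : 3 ≤ n) (hW : isClosedWalk G K x) (hu : contOn u K x)
    (t : ℕ) : degW n ((ghUpdate n G)^[t] u) K x = degW n u K x := by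
  induction t with
  | zero => rfl
  | succ t ih =>
    rw [Function.iterate_succ_apply',
      degW_ghUpdate hn hW (contOn_iterate_ghUpdate hW.2.2 hu t), ih]

end

theorem stmt_7_general {V : Type*} (n : ℕ) (hn : 3 ≤ n) (G : SimpleGraph V)
    (K : ℕ) (x : ℕ → V) (hW : isClosedWalk G K x) :
    (∀ u : V → ZMod n, contOn u K x →
      contOn (ghUpdate n G u) K x ∧ degW n (ghUpdate n G u) K x = degW n u K x) ∧
    (∀ u₀ : V → ZMod n, contOn u₀ K x →
      ∀ t : ℕ, degW n ((ghUpdate n G)^[t] u₀) K x = degW n u₀ K x) :=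
  ⟨fun _ hu => ⟨contOn_ghUpdate hW.2.2 hu, degW_ghUpdate hn hW hu⟩,
    fun _ hu₀ => degW_iterate_ghUpdate hn hW hu₀⟩

theorem stmt_7 {V : Type*} [Fintype V] (n : ℕ) (hn : 3 ≤ n) (G : SimpleGraph V)
    (K : ℕ) (x : ℕ → V) (hW : isClosedWalk G K x) :
    (∀ u : V → ZMod n, contOn u K x →
      contOn (ghUpdate n G u) K x ∧ degW n (ghUpdate n G u) K x = degW n u K x) ∧
    (∀ u₀ : V → ZMod n, contOn u₀ K x →
      ∀ t : ℕ, degW n ((ghUpdate n G)^[t] u₀) K x = degW n u₀ K x) :=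
  stmt_7_general n hn G K x hW
end

section
/- Suppose n > 3. Let x, y, z be pairwise adjacent vertices and let u be a state with u(y) − u(x), u(z) − u(x), and u(y) − u(z) all in {−1, 0, 1} (in ℤ/nℤ). Then the integer lifts satisfy d_u(x, y) = d_u(x, z) + d_u(z, y). Consequently, if two closed walks on whose consecutive pairs u is continuous differ only in that one traverses the edge from x to y directly while the other passes from x through z to y, then u has the same degree on both walks (homotopy invariance of degree across a 2-simplex of the flag complex). -/
lemma zmod_cast_ne_zero {n k : ℕ} (h0 : 0 < k) (hk : k < n) : ((k : ℕ) : ZMod n) ≠ 0 := by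
  haveI : NeZero n := ⟨by omega⟩
  rw [Ne, ZMod.natCast_eq_zero_iff]
  exact fun h => absurd (Nat.le_of_dvd h0 h) (by omega)

lemma dInt_add {n : ℕ} (hn : 3 < n) (a b : ZMod n)
    (ha : a ∈ ({-1, 0, 1} : Set (ZMod n))) (hb : b ∈ ({-1, 0, 1} : Set (ZMod n)))
    (hab : a + b ∈ ({-1, 0, 1} : Set (ZMod n))) :
    dInt (a + b) = dInt a + dInt b := by
  have e1 : (1 : ZMod n) ≠ 0 := by
    have := zmod_cast_ne_zero (n := n) (k := 1) one_pos (by omega); simpa using this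
  have e2 : (2 : ZMod n) ≠ 0 := by
    have := zmod_cast_ne_zero (n := n) (k := 2) (by omega) (by omega); simpa using this
  have e3 : (3 : ZMod n) ≠ 0 := by
    have := zmod_cast_ne_zero (n := n) (k := 3) (by omega) (by omega); simpa using this
  have n10 : (-1 : ZMod n) ≠ 0 := fun h => e1 (by linear_combination -h)
  have n11 : (-1 : ZMod n) ≠ 1 := fun h => e2 (by linear_combination -h)
  simp only [Set.mem_insert_iff, Set.mem_singleton_iff] at ha hb hab
  rcases ha with rfl | rfl | rfl <;> rcases hb with rfl | rfl | rfl <;>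
    first
    | (exfalso; rcases hab with h | h | h
       · exact e1 (by linear_combination -h)
       · exact e2 (by linear_combination -h)
       · exact e3 (by linear_combination -h))
    | (exfalso; rcases hab with h | h | h
       · exact e3 (by linear_combination h)
       · exact e2 (by linear_combination h)
       · exact e1 (by linear_combination h))
    | norm_num [dInt, e1, n10, n11]

theorem stmt_9 {V : Type*} [Fintype V] (n : ℕ) (hn : 3 < n) (G : SimpleGraph V)
    (u : V → ZMod n) (x y z : V) (hxy : G.Adj x y) (hxz : G.Adj x z) (hzy : G.Adj z y)
    (h1 : u y - u x ∈ ({-1, 0, 1} : Set (ZMod n)))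
    (h2 : u z - u x ∈ ({-1, 0, 1} : Set (ZMod n)))
    (h3 : u y - u z ∈ ({-1, 0, 1} : Set (ZMod n))) :
    dInt (u y - u x) = dInt (u z - u x) + dInt (u y - u z) ∧
    (∀ (K j : ℕ) (w w' : ℕ → V), j < K →
      isClosedWalk G K w → isClosedWalk G (K + 1) w' →
      w j = x → w (j + 1) = y →
      (∀ i, i ≤ j → w' i = w i) → w' (j + 1) = z →
      (∀ i, j + 1 ≤ i → i ≤ K → w' (i + 1) = w i) →
      contOn u K w → contOn u (K + 1) w' →
      degW n u (K + 1) w' = degW n u K w) := by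
  have key : dInt (u y - u x) = dInt (u z - u x) + dInt (u y - u z) := by
    have h := dInt_add hn (u z - u x) (u y - u z) h2 h3
      (by rw [show u z - u x + (u y - u z) = u y - u x by ring]; exact h1)
    rwa [show u z - u x + (u y - u z) = u y - u x by ring] at h
  refine ⟨key, ?_⟩
  intro K j w w' hjK hw hw' hwj hwj1 hlow hmid hhigh hcw hcw'
  unfold degW
  congr 1
  rw [Int.cast_inj]
  set g : ℕ → ℤ := fun i => dInt (u (w' (i + 1)) - u (w' i)) with hg
  set f : ℕ → ℤ := fun i => dInt (u (w (i + 1)) - u (w i)) with hf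
  have hsplit : ∑ i ∈ Finset.range (K + 1), g i
      = ∑ i ∈ Finset.range j, g i + g j + g (j + 1) + ∑ i ∈ Finset.Ico (j + 2) (K + 1), g i := by
    rw [Finset.range_eq_Ico, ← Finset.sum_Ico_consecutive g (Nat.zero_le (j + 2)) (by omega)]
    rw [← Finset.range_eq_Ico, Finset.sum_range_succ, Finset.sum_range_succ]
  have hsplit' : ∑ i ∈ Finset.range K, f i
      = ∑ i ∈ Finset.range j, f i + f j + ∑ i ∈ Finset.Ico (j + 1) K, f i := by
    rw [Finset.range_eq_Ico, ← Finset.sum_Ico_consecutive f (Nat.zero_le (j + 1)) (by omega)]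
    rw [← Finset.range_eq_Ico, Finset.sum_range_succ]
  rw [hsplit, hsplit']
  have hlowsum : ∑ i ∈ Finset.range j, g i = ∑ i ∈ Finset.range j, f i := by
    refine Finset.sum_congr rfl fun i hi => ?_
    rw [Finset.mem_range] at hi
    simp only [hg, hf, hlow i (by omega), hlow (i + 1) (by omega)]
  have hmidsum : g j + g (j + 1) = f j := by
    have ha : g j = dInt (u z - u x) := by
      simp only [hg, hmid, hlow j le_rfl, hwj]
    have hb : g (j + 1) = dInt (u y - u z) := by
      have : w' (j + 1 + 1) = w (j + 1) := hhigh (j + 1) le_rfl (by omega)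
      simp only [hg, this, hmid, hwj1]
    have hc : f j = dInt (u y - u x) := by simp only [hf, hwj, hwj1]
    rw [ha, hb, hc, key]
  have htail : ∑ i ∈ Finset.Ico (j + 2) (K + 1), g i = ∑ i ∈ Finset.Ico (j + 1) K, f i := by
    rw [Finset.sum_Ico_eq_sum_range, Finset.sum_Ico_eq_sum_range]
    rw [show K + 1 - (j + 2) = K - (j + 1) by omega]
    refine Finset.sum_congr rfl fun i hi => ?_
    rw [Finset.mem_range] at hi
    have h1 : w' (j + i + 3) = w (j + i + 2) := hhigh (j + i + 2) (by omega) (by omega)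
    have h2 : w' (j + i + 2) = w (j + i + 1) := hhigh (j + i + 1) (by omega) (by omega)
    simp only [hg, hf, show j + 2 + i + 1 = j + i + 3 by omega,
      show j + 2 + i = j + i + 2 by omega, show j + 1 + i + 1 = j + i + 2 by omega,
      show j + 1 + i = j + i + 1 by omega, h1, h2]
  rw [hlowsum, htail]
  omega
end

section
/- Let the network be a finite connected simple graph and suppose the initial state u₀ has a seed. Then there exist a time T and a map par : X → X such that for every vertex x, par(x) is adjacent to x and x is subordinate to par(x) at time T, i.e. u_T(par(x)) = u_T(x) + 1; moreover, for every vertex x there exists k ≥ 0 such that the iterate par^k(x) lies on a seed of the state u_T. (Thus the directed edges x → par(x), in the direction of subordination, form a spanning functional graph whose cycles are seeds: a spanning forest rooted at seeds.) -/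
/- A state `u` has a seed: a closed walk `x₀, …, x_K = x₀` with `u (x i) = i mod n`. -/
def hasSeed {V : Type*} (n : ℕ) (G : SimpleGraph V) (u : V → ZMod n) : Prop :=
  ∃ (K : ℕ) (x : ℕ → V), 1 ≤ K ∧ x K = x 0 ∧ (∀ i < K, G.Adj (x i) (x (i + 1))) ∧
    ∀ i ≤ K, u (x i) = (i : ZMod n)


/-!
Along a seed every vertex is one step behind the next, so the seed advances in lockstep forever.
A neighbour `x` of a vertex `y` that advances forever eventually advances forever too: each time
`x` stalls, its lag `u y - u x` grows by one modulo `n`, and no stall happens at lag `1`. By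
connectivity there is a time `T` after which every vertex advances; from then on all differences
are frozen, and a vertex leaving state `0` was excited by a neighbour one step ahead of it, which
gives `par`. Along `par` the state increases by one per step, so every `par`-orbit ends in a cycle
that, read from a vertex in state `0`, is a seed.
-/

open Function

lemma ZMod.val_sub_one_lt_s11 {n : ℕ} [NeZero n] {b : ZMod n} (hb : b ≠ 0) : (b - 1).val < b.val := by
  have hpos : 0 < b.val := ZMod.val_pos.2 hb
  have hcast : b - 1 = ((b.val - 1 : ℕ) : ZMod n) := by
    rw [Nat.cast_sub hpos, ZMod.natCast_zmod_val, Nat.cast_one]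
  rw [hcast, ZMod.val_natCast]
  exact (Nat.mod_le _ _).trans_lt (Nat.sub_lt hpos one_pos)

lemma exists_iterate_isPeriodicPt {α : Type*} [Finite α] (f : α → α) (x : α) :
    ∃ a L, 0 < L ∧ IsPeriodicPt f L (f^[a] x) := by
  obtain ⟨a, b, hne, heq⟩ := Finite.exists_ne_map_eq_of_infinite (fun k : ℕ => f^[k] x)
  wlog hab : a < b generalizing a b
  · exact this b a hne.symm heq.symm (by omega)
  refine ⟨a, b - a, by omega, ?_⟩
  change f^[b - a] (f^[a] x) = f^[a] x
  rw [← iterate_add_apply, Nat.sub_add_cancel hab.le]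
  exact heq.symm

section Update

variable {V : Type*} {n : ℕ} {G : SimpleGraph V} {u : V → ZMod n} {x : V}

lemma ghUpdate_apply_of_ne_zero (h : u x ≠ 0) : ghUpdate n G u x = u x + 1 := by
  simp [ghUpdate, h]

lemma ghUpdate_apply_of_adj {y : V} (hxy : G.Adj x y) (hy : u y = u x + 1) :
    ghUpdate n G u x = u x + 1 := by
  by_cases h : u x = 0
  · have : ∃ y, G.Adj x y ∧ u y = 1 := ⟨y, hxy, by rw [hy, h, zero_add]⟩
    simp [ghUpdate, h, this]
  · exact ghUpdate_apply_of_ne_zero h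

lemma ghUpdate_apply_eq_add_one_or (u : V → ZMod n) (x : V) :
    ghUpdate n G u x = u x + 1 ∨ (u x = 0 ∧ ghUpdate n G u x = 0) := by
  by_cases h : u x = 0
  · by_cases hex : ∃ y, G.Adj x y ∧ u y = 1 <;> simp [ghUpdate, h, hex]
  · exact Or.inl (ghUpdate_apply_of_ne_zero h)

lemma exists_adj_eq_one_of_ghUpdate_eq_one [Nontrivial (ZMod n)] (h0 : u x = 0)
    (h1 : ghUpdate n G u x = 1) : ∃ y, G.Adj x y ∧ u y = 1 := by
  by_contra hno
  simp [ghUpdate, h0, hno] at h1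

end Update

section Trajectory

variable {V : Type*} {n : ℕ} {G : SimpleGraph V} {u : ℕ → V → ZMod n} {x y : V} {t : ℕ}

def AdvancesFrom (u : ℕ → V → ZMod n) (x : V) (t : ℕ) : Prop :=
  ∀ s, t ≤ s → u (s + 1) x = u s x + 1

lemma AdvancesFrom.mono {t' : ℕ} (h : AdvancesFrom u x t) (ht : t ≤ t') : AdvancesFrom u x t' :=
  fun s hs => h s (ht.trans hs)

lemma AdvancesFrom.apply_add (h : AdvancesFrom u x t) (k : ℕ) : u (t + k) x = u t x + k := by
  induction k with
  | zero => simp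
  | succ k ih =>
    rw [← add_assoc, h _ (Nat.le_add_right t k), ih]
    push_cast
    ring

lemma advancesFrom_zero_of_closed_walk (hu : ∀ t, u (t + 1) = ghUpdate n G (u t)) {K : ℕ}
    {xs : ℕ → V} (hK : 1 ≤ K) (hclosed : xs K = xs 0) (hadj : ∀ i < K, G.Adj (xs i) (xs (i + 1)))
    (hsub : ∀ i < K, u 0 (xs (i + 1)) = u 0 (xs i) + 1) : AdvancesFrom u (xs 0) 0 := by
  have sub : ∀ t, ∀ i < K, u t (xs (i + 1)) = u t (xs i) + 1 := by
    intro t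
    induction t with
    | zero => exact hsub
    | succ t ih =>
      have adv : ∀ i < K, u (t + 1) (xs i) = u t (xs i) + 1 := fun i hi => by
        rw [hu]
        exact ghUpdate_apply_of_adj (hadj i hi) (ih i hi)
      intro i hi
      have hnext : u (t + 1) (xs (i + 1)) = u t (xs (i + 1)) + 1 := by
        rcases Nat.lt_or_ge (i + 1) K with h | h
        · exact adv _ h
        · rw [show i + 1 = K by omega, hclosed]
          exact adv 0 hK
      rw [hnext, adv i hi, ih i hi]
  intro t _
  rw [hu]
  exact ghUpdate_apply_of_adj (hadj 0 hK) (sub t 0 hK)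

lemma exists_advancesFrom_zero_of_hasSeed (hu : ∀ t, u (t + 1) = ghUpdate n G (u t))
    (hseed : hasSeed n G (u 0)) : ∃ x, AdvancesFrom u x 0 := by
  obtain ⟨K, xs, hK, hclosed, hadj, hval⟩ := hseed
  refine ⟨xs 0, advancesFrom_zero_of_closed_walk hu hK hclosed hadj fun i hi => ?_⟩
  rw [hval _ hi, hval _ hi.le, Nat.cast_succ]

/- `(1 - (u s y - u s x)).val` never increases while `y` advances, and drops whenever `x` stalls:
a stalling `x` rests at `0` with no neighbour in state `1`, so then `u s y - u s x ≠ 1`. -/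
lemma AdvancesFrom.exists_of_adj [NeZero n] (hu : ∀ t, u (t + 1) = ghUpdate n G (u t))
    (hxy : G.Adj x y) (hy : AdvancesFrom u y t) : ∃ t', AdvancesFrom u x t' := by
  set μ : ℕ → ℕ := fun s => (1 - (u (t + s) y - u (t + s) x)).val
  have drop : ∀ s, u (t + s + 1) x ≠ u (t + s) x + 1 → μ (s + 1) < μ s := by
    intro s hstall
    obtain ⟨hx0, hx1⟩ := (ghUpdate_apply_eq_add_one_or (G := G) (u (t + s)) x).resolve_left
      (by rwa [← hu])
    have hy1 : u (t + s) y ≠ 1 := fun h =>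
      hstall (by rw [hu]; exact ghUpdate_apply_of_adj hxy (by rw [h, hx0, zero_add]))
    have key : 1 - (u (t + (s + 1)) y - u (t + (s + 1)) x) = (1 - u (t + s) y) - 1 := by
      rw [← add_assoc, hy _ (Nat.le_add_right t s), hu, hx1]
      ring
    simp only [μ, key, hx0, sub_zero]
    exact ZMod.val_sub_one_lt_s11 (sub_ne_zero.2 (Ne.symm hy1))
  have step : ∀ s, μ (s + 1) ≤ μ s := by
    intro s
    by_cases hadv : u (t + s + 1) x = u (t + s) x + 1
    · simp only [μ, ← add_assoc, hy _ (Nat.le_add_right t s), hadv, add_sub_add_right_eq_sub,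
        le_refl]
    · exact (drop s hadv).le
  obtain ⟨s₀, hs₀⟩ := WellFoundedLT.antitone_chain_condition (antitone_nat_of_succ_le step)
  refine ⟨t + s₀, fun s hs => ?_⟩
  obtain ⟨k, rfl⟩ := Nat.exists_eq_add_of_le hs
  by_contra hstall
  have hlt := drop (s₀ + k) (by rwa [← add_assoc])
  rw [← hs₀ (s₀ + k + 1) (by omega), ← hs₀ (s₀ + k) (by omega)] at hlt
  exact lt_irrefl _ hlt

lemma exists_forall_advancesFrom [Finite V] [NeZero n]
    (hu : ∀ t, u (t + 1) = ghUpdate n G (u t)) (hconn : G.Preconnected)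
    (hx : AdvancesFrom u x t) : ∃ T, ∀ y, AdvancesFrom u y T := by
  have hall : ∀ y, ∃ t', AdvancesFrom u y t' := by
    intro y
    induction (SimpleGraph.reachable_iff_reflTransGen x y).1 (hconn x y) with
    | refl => exact ⟨t, hx⟩
    | tail _ hadj ih =>
      obtain ⟨t', ht'⟩ := ih
      exact ht'.exists_of_adj hu hadj.symm
  choose τ hτ using hall
  obtain ⟨T, hT⟩ := Finite.exists_le τ
  exact ⟨T, fun y => (hτ y).mono (hT y)⟩

lemma exists_adj_eq_add_one_of_forall_advancesFrom [Fact (1 < n)]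
    (hu : ∀ t, u (t + 1) = ghUpdate n G (u t)) {T : ℕ} (hT : ∀ y, AdvancesFrom u y T) (x : V) :
    ∃ y, G.Adj x y ∧ u T y = u T x + 1 := by
  set k := (-u T x).val
  have hk : (k : ZMod n) = -u T x := ZMod.natCast_zmod_val _
  have hx0 : u (T + k) x = 0 := by rw [(hT x).apply_add, hk, add_neg_cancel]
  have hx1 : ghUpdate n G (u (T + k)) x = 1 := by
    rw [← hu, hT x _ (Nat.le_add_right T k), hx0, zero_add]
  obtain ⟨y, hxy, hy⟩ := exists_adj_eq_one_of_ghUpdate_eq_one hx0 hx1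
  refine ⟨y, hxy, ?_⟩
  rw [(hT y).apply_add, hk] at hy
  linear_combination hy

end Trajectory

section Seeds

variable {V : Type*} {n : ℕ} {G : SimpleGraph V} {u : V → ZMod n} {par : V → V}

def LiesOnSeed (n : ℕ) (G : SimpleGraph V) (u : V → ZMod n) (v : V) : Prop :=
  ∃ (K : ℕ) (xs : ℕ → V), 1 ≤ K ∧ xs K = xs 0 ∧ (∀ i < K, G.Adj (xs i) (xs (i + 1))) ∧
    (∀ i ≤ K, u (xs i) = (i : ZMod n)) ∧ ∃ i ≤ K, xs i = v

lemma apply_iterate_of_forall_eq_add_one (hpar : ∀ x, u (par x) = u x + 1) (x : V) (k : ℕ) :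
    u (par^[k] x) = u x + k := by
  induction k with
  | zero => simp
  | succ k ih =>
    rw [iterate_succ_apply', hpar, ih]
    push_cast
    ring

lemma liesOnSeed_of_isPeriodicPt (hpar : ∀ x, G.Adj x (par x) ∧ u (par x) = u x + 1) {L : ℕ}
    {z : V} (hL : 0 < L) (hz : IsPeriodicPt par L z) (hz0 : u z = 0) : LiesOnSeed n G u z := by
  refine ⟨L, fun i => par^[i] z, hL, hz, fun i _ => ?_, fun i _ => ?_, 0, Nat.zero_le L, rfl⟩
  · change G.Adj (par^[i] z) (par^[i + 1] z)
    rw [iterate_succ_apply']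
    exact (hpar _).1
  · rw [apply_iterate_of_forall_eq_add_one (fun x => (hpar x).2), hz0, zero_add]

lemma exists_iterate_liesOnSeed [Finite V] [NeZero n]
    (hpar : ∀ x, G.Adj x (par x) ∧ u (par x) = u x + 1) (x : V) :
    ∃ k, LiesOnSeed n G u (par^[k] x) := by
  obtain ⟨a, L, hL, hper⟩ := exists_iterate_isPeriodicPt par x
  set j := (-u (par^[a] x)).val
  refine ⟨j + a, ?_⟩
  rw [iterate_add_apply]
  refine liesOnSeed_of_isPeriodicPt hpar hL (hper.apply_iterate j) ?_
  rw [apply_iterate_of_forall_eq_add_one (fun x => (hpar x).2), ZMod.natCast_zmod_val,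
    add_neg_cancel]

end Seeds

theorem stmt_11 {V : Type*} [Fintype V] (n : ℕ) (hn : 2 ≤ n) (G : SimpleGraph V)
    (hconn : G.Connected) (u₀ : V → ZMod n) (hseed : hasSeed n G u₀) :
    ∃ (T : ℕ) (par : V → V),
      (∀ x : V, G.Adj x (par x) ∧
        (ghUpdate n G)^[T] u₀ (par x) = (ghUpdate n G)^[T] u₀ x + 1) ∧
      (∀ x : V, ∃ k : ℕ, ∃ (K : ℕ) (xs : ℕ → V), 1 ≤ K ∧ xs K = xs 0 ∧
        (∀ i < K, G.Adj (xs i) (xs (i + 1))) ∧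
        (∀ i ≤ K, (ghUpdate n G)^[T] u₀ (xs i) = (i : ZMod n)) ∧
        ∃ i ≤ K, xs i = par^[k] x) := by
  have : Fact (1 < n) := ⟨hn⟩
  set u : ℕ → V → ZMod n := fun t => (ghUpdate n G)^[t] u₀
  have hu : ∀ t, u (t + 1) = ghUpdate n G (u t) := fun t => iterate_succ_apply' _ t u₀
  obtain ⟨x₀, hx₀⟩ := exists_advancesFrom_zero_of_hasSeed hu hseed
  obtain ⟨T, hT⟩ := exists_forall_advancesFrom hu hconn.preconnected hx₀
  choose par hpar using exists_adj_eq_add_one_of_forall_advancesFrom hu hT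
  exact ⟨T, par, hpar, exists_iterate_liesOnSeed hpar⟩
end

section
/- Let t ≥ n − 2 and suppose u_t(x) = 1 for some vertex x. Then there exists a walk x = x₁, x₂, …, x_{n−1} in the network (x_j adjacent to x_{j+1} for each j) such that u_t(x_j) = j (mod n) for all 1 ≤ j ≤ n−1. -/
/-!
A vertex can only enter state `1` by being excited by a neighbour in state `1` one step
earlier. Following these excitations back `n - 2` steps from `x` gives a walk
`x = y₀, y₁, …, y_{n-2}` with `y_i` in state `1` at time `t - i`; since a nonzero state just
counts up, `y_i` is in state `i + 1` at time `t`.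
-/

namespace GreenbergHastings

variable {V : Type*} {n : ℕ} {G : SimpleGraph V}

lemma ghUpdate_of_ne_zero {u : V → ZMod n} {x : V} (hx : u x ≠ 0) :
    ghUpdate n G u x = u x + 1 := by
  simp [ghUpdate, hx]

lemma exists_adj_of_ghUpdate_eq_one [Nontrivial (ZMod n)] {u : V → ZMod n} {x : V}
    (hx : ghUpdate n G u x = 1) : ∃ y, G.Adj x y ∧ u y = 1 := by
  by_cases h0 : u x = 0
  · by_contra hy
    simp [ghUpdate, h0, hy] at hx
  · rw [ghUpdate_of_ne_zero h0, add_eq_right] at hx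
    exact absurd hx h0

lemma iterate_ghUpdate_of_eq_one {u : V → ZMod n} {y : V} (hy : u y = 1) :
    ∀ r < n, (ghUpdate n G)^[r] u y = r + 1
  | 0, _ => by simpa using hy
  | r + 1, hr => by
    have hprev := iterate_ghUpdate_of_eq_one hy r (by omega)
    have hne : ((r : ZMod n) + 1) ≠ 0 := by
      rw [← Nat.cast_succ, Ne, ZMod.natCast_eq_zero_iff]
      exact fun hdvd => absurd (Nat.le_of_dvd r.succ_pos hdvd) (by omega)
    rw [Function.iterate_succ_apply', ghUpdate_of_ne_zero (hprev ▸ hne), hprev]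
    push_cast
    rfl

lemma exists_backward_walk [Nontrivial (ZMod n)] (u : V → ZMod n) :
    ∀ (k s : ℕ) (x : V), k ≤ s → (ghUpdate n G)^[s] u x = 1 →
      ∃ ys : ℕ → V, ys 0 = x ∧ (∀ i < k, G.Adj (ys i) (ys (i + 1))) ∧
        ∀ i ≤ k, (ghUpdate n G)^[s - i] u (ys i) = 1
  | 0, _, x, _, hx => ⟨fun _ => x, rfl, by simp, fun i hi => by simpa [Nat.le_zero.mp hi] using hx⟩
  | k + 1, s + 1, x, hk, hx => by
    rw [Function.iterate_succ_apply'] at hx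
    obtain ⟨y, hxy, hy⟩ := exists_adj_of_ghUpdate_eq_one hx
    obtain ⟨ys, hys0, hadj, hval⟩ := exists_backward_walk u k s y (by omega) hy
    refine ⟨fun | 0 => x | i + 1 => ys i, rfl, ?_, ?_⟩
    · rintro (_ | i) hi
      · simpa [hys0] using hxy
      · exact hadj i (by omega)
    · rintro (_ | i) hi
      · simpa [Function.iterate_succ_apply'] using hx
      · simpa using hval i (by omega)

end GreenbergHastings

open GreenbergHastings in
theorem stmt_15_general {V : Type*} (n : ℕ) (hn : 2 ≤ n) (G : SimpleGraph V)
    (u₀ : V → ZMod n) (t : ℕ) (ht : n - 2 ≤ t) (x : V)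
    (hx : (ghUpdate n G)^[t] u₀ x = 1) :
    ∃ xs : ℕ → V, xs 1 = x ∧
      (∀ j, 1 ≤ j → j + 1 ≤ n - 1 → G.Adj (xs j) (xs (j + 1))) ∧
      (∀ j, 1 ≤ j → j ≤ n - 1 → (ghUpdate n G)^[t] u₀ (xs j) = (j : ZMod n)) := by
  have : Fact (1 < n) := ⟨hn⟩
  obtain ⟨ys, hys0, hadj, hval⟩ := exists_backward_walk u₀ (n - 2) t x ht hx
  refine ⟨fun j => ys (j - 1), hys0, fun j hj hjn => ?_, fun j hj hjn => ?_⟩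
  · simpa [Nat.sub_add_cancel hj] using hadj (j - 1) (by omega)
  · have hstate := iterate_ghUpdate_of_eq_one (G := G) (hval (j - 1) (by omega)) (j - 1) (by omega)
    rwa [← Function.iterate_add_apply, Nat.add_sub_cancel' (by omega), ← Nat.cast_add_one,
      Nat.sub_add_cancel hj] at hstate

theorem stmt_15 {V : Type*} [Fintype V] (n : ℕ) (hn : 2 ≤ n) (G : SimpleGraph V)
    (u₀ : V → ZMod n) (t : ℕ) (ht : n - 2 ≤ t) (x : V)
    (hx : (ghUpdate n G)^[t] u₀ x = 1) :
    ∃ xs : ℕ → V, xs 1 = x ∧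
      (∀ j, 1 ≤ j → j + 1 ≤ n - 1 → G.Adj (xs j) (xs (j + 1))) ∧
      (∀ j, 1 ≤ j → j ≤ n - 1 → (ghUpdate n G)^[t] u₀ (xs j) = (j : ZMod n)) :=
  stmt_15_general n hn G u₀ t ht x hx
end

section
/- Let S be a nonempty set of vertices of a connected network and d ≥ 1, and suppose that at time t no vertex at graph (hop) distance at least d from S is in state 1, i.e. u_t(x) ≠ 1 whenever dist(x, S) ≥ d. Then for every k with 0 ≤ k ≤ n − 2, every vertex x with dist(x, S) ≥ d + k satisfies u_{t+k}(x) ∉ {1, 2, …, k+1}. In particular, every vertex at distance at least d + n − 2 from S satisfies u_{t+n−2}(x) = 0: nodes far from S turn to state 0 after n − 2 further steps. -/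
theorem stmt_16 {V : Type*} [Fintype V] (n : ℕ) (hn : 2 ≤ n) (G : SimpleGraph V)
    (hconn : G.Connected) (u₀ : V → ZMod n) (S : Set V) (hS : S.Nonempty)
    (d : ℕ) (hd : 1 ≤ d) (t : ℕ)
    (hhyp : ∀ x : V, (∀ s ∈ S, d ≤ G.dist x s) → (ghUpdate n G)^[t] u₀ x ≠ 1) :
    (∀ k ≤ n - 2, ∀ x : V, (∀ s ∈ S, d + k ≤ G.dist x s) →
      ∀ j, 1 ≤ j → j ≤ k + 1 → (ghUpdate n G)^[t + k] u₀ x ≠ (j : ZMod n)) ∧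
    (∀ x : V, (∀ s ∈ S, d + (n - 2) ≤ G.dist x s) →
      (ghUpdate n G)^[t + (n - 2)] u₀ x = 0) := by
  haveI : NeZero n := ⟨by omega⟩
  have key : ∀ k, k ≤ n - 2 → ∀ x : V, (∀ s ∈ S, d + k ≤ G.dist x s) →
      ∀ j, 1 ≤ j → j ≤ k + 1 → (ghUpdate n G)^[t + k] u₀ x ≠ (j : ZMod n) := by
    intro k
    induction k with
    | zero =>
      intro _ x hx j hj1 hj2
      have hj : j = 1 := by omega
      subst hj
      simpa using hhyp x (fun s hs => by simpa using hx s hs)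
    | succ k ih =>
      intro hk x hx j hj1 hj2
      have hk' : k ≤ n - 2 := by omega
      have hxk : ∀ s ∈ S, d + k ≤ G.dist x s := fun s hs =>
        le_trans (by omega) (hx s hs)
      have hn2 : n - 2 + 2 = n := by omega
      have hjn : j < n := by omega
      have hjne0 : (j : ZMod n) ≠ 0 := by
        intro h0
        have hdvd := (ZMod.natCast_eq_zero_iff j n).mp h0
        have := Nat.le_of_dvd (by omega) hdvd
        omega
      rw [show t + (k + 1) = (t + k) + 1 by ring, Function.iterate_succ_apply']
      set w := (ghUpdate n G)^[t + k] u₀ with hw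
      intro hcon
      simp only [ghUpdate] at hcon
      by_cases h0 : w x = 0
      · rw [if_pos h0] at hcon
        split_ifs at hcon with hy
        · obtain ⟨y, hadj, hy1⟩ := hy
          have hyd : ∀ s ∈ S, d + k ≤ G.dist y s := by
            intro s hs
            have htri := hconn.dist_triangle (u := x) (v := y) (w := s)
            have h1 : G.dist x y = 1 := SimpleGraph.dist_eq_one_iff_adj.mpr hadj
            have := hx s hs
            omega
          exact ih hk' y hyd 1 le_rfl (by omega) (by exact_mod_cast hy1)
        · exact hjne0 hcon.symm
      · rw [if_neg h0] at hcon
        rcases Nat.lt_or_ge 1 j with hj | hj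
        · have hcast : ((j - 1 : ℕ) : ZMod n) + 1 = (j : ZMod n) := by
            push_cast [Nat.cast_sub (by omega : 1 ≤ j)]
            ring
          have : w x = ((j - 1 : ℕ) : ZMod n) := by
            have := hcon.trans hcast.symm
            exact add_right_cancel this
          exact ih hk' x hxk (j - 1) (by omega) (by omega) this
        · have hj1' : j = 1 := by omega
          subst hj1'
          apply h0
          have : w x + 1 = (0 : ZMod n) + 1 := by
            rw [zero_add]; simpa using hcon
          exact add_right_cancel this
  refine ⟨key, ?_⟩
  intro x hx
  set w := (ghUpdate n G)^[t + (n - 2)] u₀ with hw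
  by_contra hne
  have hv : (w x).val < n := ZMod.val_lt _
  have hv1 : 1 ≤ (w x).val := by
    rcases Nat.eq_zero_or_pos (w x).val with h | h
    · exact absurd ((ZMod.val_eq_zero _).mp h) hne
    · exact h
  have hcast : ((w x).val : ZMod n) = w x := by
    simp [ZMod.natCast_val, ZMod.cast_id]
  exact key (n - 2) le_rfl x hx (w x).val hv1 (by omega) hcast.symm
end

section
/- Let φ₁ and φ₂ be continuous states on the network with supports X₁ = {x : φ₁(x) ≠ 0} and X₂ = {x : φ₂(x) ≠ 0}, and suppose no vertex of X₁ equals or is adjacent to any vertex of X₂. Then the sum φ = φ₁ + φ₂ is a continuous state, and for every closed walk W one has deg(φ₁ + φ₂, W) = deg(φ₁, W) + deg(φ₂, W). -/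
/-! Because the supports are neither shared nor adjacent, along every edge one of the two states
vanishes at both ends. So the increment of `φ₁ + φ₂` across an edge is the increment of a single
summand, the other being `0`; continuity and additivity of the degree follow edge by edge. -/

section SeparatedSupports

variable {V M : Type*} {G : SimpleGraph V} {f g : V → M}

lemma sub_eq_zero_or_sub_eq_zero_of_adj [AddGroup M]
    (hsep : ∀ x₁ x₂ : V, f x₁ ≠ 0 → g x₂ ≠ 0 → x₁ ≠ x₂ ∧ ¬ G.Adj x₁ x₂)
    {x y : V} (hxy : G.Adj x y) : f x - f y = 0 ∨ g x - g y = 0 := by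
  by_contra! hne
  obtain ⟨hf, hg⟩ := hne
  have hf_supp : f x ≠ 0 ∨ f y ≠ 0 := by by_contra! h; simp [h.1, h.2] at hf
  have hg_supp : g x ≠ 0 ∨ g y ≠ 0 := by by_contra! h; simp [h.1, h.2] at hg
  rcases hf_supp with hfx | hfy <;> rcases hg_supp with hgx | hgy
  · exact (hsep x x hfx hgx).1 rfl
  · exact (hsep x y hfx hgy).2 hxy
  · exact (hsep y x hfy hgx).2 hxy.symm
  · exact (hsep y y hfy hgy).1 rfl

lemma add_sub_add_eq_of_adj [AddCommGroup M]
    (hsep : ∀ x₁ x₂ : V, f x₁ ≠ 0 → g x₂ ≠ 0 → x₁ ≠ x₂ ∧ ¬ G.Adj x₁ x₂)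
    {x y : V} (hxy : G.Adj x y) :
    (f + g) x - (f + g) y = f x - f y ∨ (f + g) x - (f + g) y = g x - g y := by
  rcases sub_eq_zero_or_sub_eq_zero_of_adj hsep hxy with h | h
  · right; rw [Pi.add_apply, Pi.add_apply, add_sub_add_comm, h, zero_add]
  · left; rw [Pi.add_apply, Pi.add_apply, add_sub_add_comm, h, add_zero]

end SeparatedSupports

lemma dInt_add_of_eq_zero_or {n : ℕ} {a b : ZMod n} (h : a = 0 ∨ b = 0) :
    dInt (a + b) = dInt a + dInt b := by
  rcases h with rfl | rfl <;> simp [dInt]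

section States

variable {V : Type*} {n : ℕ} {G : SimpleGraph V} {φ₁ φ₂ : V → ZMod n}

lemma contState_add_of_separated (h1 : contState G φ₁) (h2 : contState G φ₂)
    (hsep : ∀ x₁ x₂ : V, φ₁ x₁ ≠ 0 → φ₂ x₂ ≠ 0 → x₁ ≠ x₂ ∧ ¬ G.Adj x₁ x₂) :
    contState G (φ₁ + φ₂) := by
  intro x y hxy
  rcases add_sub_add_eq_of_adj hsep hxy with h | h <;> rw [h]
  exacts [h1 x y hxy, h2 x y hxy]

lemma degW_add_of_separated
    (hsep : ∀ x₁ x₂ : V, φ₁ x₁ ≠ 0 → φ₂ x₂ ≠ 0 → x₁ ≠ x₂ ∧ ¬ G.Adj x₁ x₂)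
    {K : ℕ} {x : ℕ → V} (hwalk : ∀ i < K, G.Adj (x i) (x (i + 1))) :
    degW n (φ₁ + φ₂) K x = degW n φ₁ K x + degW n φ₂ K x := by
  have hstep : ∀ i ∈ Finset.range K,
      dInt ((φ₁ + φ₂) (x (i + 1)) - (φ₁ + φ₂) (x i)) =
        dInt (φ₁ (x (i + 1)) - φ₁ (x i)) + dInt (φ₂ (x (i + 1)) - φ₂ (x i)) := by
    intro i hi
    rw [Pi.add_apply, Pi.add_apply, add_sub_add_comm]
    exact dInt_add_of_eq_zero_or
      (sub_eq_zero_or_sub_eq_zero_of_adj hsep (hwalk i (Finset.mem_range.mp hi)).symm)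
  simp only [degW, Finset.sum_congr rfl hstep, Finset.sum_add_distrib, Int.cast_add, add_div]

end States

theorem stmt_17_general {V : Type*} (n : ℕ) (G : SimpleGraph V)
    (φ₁ φ₂ : V → ZMod n) (h1 : contState G φ₁) (h2 : contState G φ₂)
    (hsep : ∀ x₁ x₂ : V, φ₁ x₁ ≠ 0 → φ₂ x₂ ≠ 0 → x₁ ≠ x₂ ∧ ¬ G.Adj x₁ x₂) :
    contState G (φ₁ + φ₂) ∧
    ∀ (K : ℕ) (x : ℕ → V), isClosedWalk G K x →
      degW n (φ₁ + φ₂) K x = degW n φ₁ K x + degW n φ₂ K x :=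
  ⟨contState_add_of_separated h1 h2 hsep, fun _ _ hw => degW_add_of_separated hsep hw.2.2⟩

theorem stmt_17 {V : Type*} [Fintype V] (n : ℕ) (hn : 3 ≤ n) (G : SimpleGraph V)
    (φ₁ φ₂ : V → ZMod n) (h1 : contState G φ₁) (h2 : contState G φ₂)
    (hsep : ∀ x₁ x₂ : V, φ₁ x₁ ≠ 0 → φ₂ x₂ ≠ 0 → x₁ ≠ x₂ ∧ ¬ G.Adj x₁ x₂) :
    contState G (φ₁ + φ₂) ∧
    ∀ (K : ℕ) (x : ℕ → V), isClosedWalk G K x →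
      degW n (φ₁ + φ₂) K x = degW n φ₁ K x + degW n φ₂ K x :=
  stmt_17_general n G φ₁ φ₂ h1 h2 hsep
end

section
/- Let n ≥ 2 and consider the complete graph on m vertices with initial states chosen independently and uniformly at random from ℤ/nℤ (equivalently, the uniform probability measure on all n^m states u : Fin m → ℤ/nℤ). Then the probability that u has no seed is at most n·(1 − 1/n)^m; in particular, this probability tends to 0 as m → ∞. -/
theorem stmt_19 (n : ℕ) (hn : 2 ≤ n) :
    (∀ m : ℕ,
      ((Nat.card {u : Fin m → ZMod n // ¬ hasSeed n (⊤ : SimpleGraph (Fin m)) u} : ℝ) /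
          (n : ℝ) ^ m) ≤ (n : ℝ) * (1 - 1 / (n : ℝ)) ^ m) ∧
    Filter.Tendsto
      (fun m : ℕ =>
        (Nat.card {u : Fin m → ZMod n // ¬ hasSeed n (⊤ : SimpleGraph (Fin m)) u} : ℝ) /
          (n : ℝ) ^ m)
      Filter.atTop (nhds 0) := by
  classical
  haveI : NeZero n := ⟨by omega⟩
  haveI : Fact (1 < n) := ⟨by omega⟩
  have hn0 : (0:ℝ) < (n:ℝ) := by positivity
  -- surjective implies hasSeed
  have hs : ∀ m : ℕ, ∀ u : Fin m → ZMod n, Function.Surjective u →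
      hasSeed n (⊤ : SimpleGraph (Fin m)) u := by
    intro m u hu
    have hgu : ∀ c : ZMod n, u ((hu c).choose) = c := fun c => (hu c).choose_spec
    refine ⟨n, fun i => (hu (i : ZMod n)).choose, by omega, ?_, ?_, ?_⟩
    · have : ((n : ℕ) : ZMod n) = ((0 : ℕ) : ZMod n) := by simp
      simp [this]
    · intro i _
      simp only [SimpleGraph.top_adj]
      intro h
      have h2 := congrArg u h
      rw [hgu, hgu] at h2
      push_cast at h2
      exact one_ne_zero (left_eq_add.mp h2)
    · intro i _; exact hgu _
  -- counting bound
  have hcount : ∀ m : ℕ,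
      Nat.card {u : Fin m → ZMod n // ¬ hasSeed n (⊤ : SimpleGraph (Fin m)) u}
        ≤ n * (n - 1) ^ m := by
    intro m
    rw [Nat.card_eq_fintype_card, Fintype.card_subtype]
    calc (Finset.univ.filter (fun u : Fin m → ZMod n =>
            ¬ hasSeed n (⊤ : SimpleGraph (Fin m)) u)).card
        ≤ (Finset.univ.biUnion (fun c : ZMod n =>
            Fintype.piFinset (fun _ : Fin m => Finset.univ.erase c))).card := by
          apply Finset.card_le_card
          intro u hu
          simp only [Finset.mem_filter] at hu
          have hns : ¬ Function.Surjective u := fun h => hu.2 (hs m u h)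
          rw [Function.Surjective] at hns
          push_neg at hns
          obtain ⟨c, hc⟩ := hns
          refine Finset.mem_biUnion.mpr ⟨c, Finset.mem_univ _, ?_⟩
          rw [Fintype.mem_piFinset]
          intro x
          exact Finset.mem_erase.mpr ⟨hc x, Finset.mem_univ _⟩
      _ ≤ ∑ c : ZMod n, (Fintype.piFinset (fun _ : Fin m => Finset.univ.erase c)).card :=
          Finset.card_biUnion_le
      _ = ∑ _c : ZMod n, (n - 1) ^ m := by
          apply Finset.sum_congr rfl
          intro c _
          rw [Fintype.card_piFinset]
          simp [Finset.card_erase_of_mem, ZMod.card]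
      _ = n * (n - 1) ^ m := by
          rw [Finset.sum_const, Finset.card_univ, ZMod.card, smul_eq_mul]
  -- real bound
  have hb : ∀ m : ℕ,
      ((Nat.card {u : Fin m → ZMod n // ¬ hasSeed n (⊤ : SimpleGraph (Fin m)) u} : ℝ) /
          (n : ℝ) ^ m) ≤ (n : ℝ) * (1 - 1 / (n : ℝ)) ^ m := by
    intro m
    have h1 : (1 - 1 / (n:ℝ)) = ((n:ℝ) - 1) / n := by
      field_simp
    have h2 : (n:ℝ) * (1 - 1 / (n:ℝ)) ^ m = ((n:ℝ) * ((n:ℝ) - 1) ^ m) / (n:ℝ) ^ m := by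
      rw [h1, div_pow, mul_div_assoc]
    rw [h2]
    have hc : ((Nat.card {u : Fin m → ZMod n // ¬ hasSeed n (⊤ : SimpleGraph (Fin m)) u}) : ℝ)
        ≤ (n:ℝ) * ((n:ℝ) - 1) ^ m := by
      have h3 : ((n * (n-1)^m : ℕ) : ℝ) = (n:ℝ) * ((n:ℝ)-1)^m := by
        push_cast [Nat.cast_sub (by omega : 1 ≤ n)]
        ring
      calc ((Nat.card {u : Fin m → ZMod n // ¬ hasSeed n (⊤ : SimpleGraph (Fin m)) u}) : ℝ)
          ≤ ((n * (n-1)^m : ℕ) : ℝ) := Nat.cast_le.mpr (hcount m)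
        _ = _ := h3
    gcongr
  refine ⟨hb, ?_⟩
  have h01 : |1 - 1/(n:ℝ)| < 1 := by
    have hp : (0:ℝ) < 1/(n:ℝ) := by positivity
    have hle : 1/(n:ℝ) ≤ 1 := by
      rw [div_le_one hn0]
      exact_mod_cast Nat.one_le_of_lt hn
    rw [abs_lt]
    constructor <;> linarith
  have hlim : Filter.Tendsto (fun m : ℕ => (n:ℝ) * (1 - 1/(n:ℝ)) ^ m)
      Filter.atTop (nhds 0) := by
    have := (tendsto_pow_atTop_nhds_zero_of_abs_lt_one h01).const_mul (n:ℝ)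
    simpa using this
  exact squeeze_zero (fun m => by positivity) hb hlim
end
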